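/- arXiv:2605.22528 — 8 statements merged into one kernel-verified Lean document; each statement's English description precedes it below -/
import Mathlib

section
/- The TU-core of the multi-winner Approval Voting (AV) game is always non-empty. That is, for every approval profile (finite alternatives C, finite voters V with approval sets A_i ⊆ C) and every committee size k ≤ |C|, there exists a utility function α : V → ℝ≥0 with ∑_{v∈V} α(v) = max over size-k committees W of ∑_{v∈V} |A(v) ∩ W|, such that for every coalition V' ⊆ V and every committee W' with |W'| ≤ ⌊|V'|·k/|V|⌋, one has ∑_{v∈V'} α(v) ≥ ∑_{v∈V'} |A(v) ∩ W'|. -/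
/-!
Let `N c` be the number of voters approving `c`, let `W₀` consist of `k` candidates with the
largest `N c`, and let `t` separate `W₀` from the other candidates: `N d ≤ t ≤ N c` for
`c ∈ W₀`, `d ∉ W₀`. Pay every voter `k t / n` and, for each `c ∈ W₀` they approve, an extra
`1 - t / N c`. The `N c` approvers of `c ∈ W₀` then jointly receive `N c - t`, so the payments add
up to `k t + ∑_{c ∈ W₀} (N c - t) = ∑_{c ∈ W₀} N c`, the optimal score.

A candidate `c ∈ W'` approved by `s ≤ N c` members of a coalition `V'` contributes at most
`t + s (1 - t / N c)` to its score if `c ∈ W₀`, and `s ≤ N c ≤ t` otherwise. The terms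
`s (1 - t / N c)` are paid to `V'` by `W₀`, and if `|W'| ≤ |V'| k / n` the remaining `|W'| t` is
covered by the `|V'|` base payments `k t / n`.
-/

open Finset

section TopSubset

variable {ι M : Type*} [DecidableEq ι] [AddCommMonoid M] [LinearOrder M]
  [IsOrderedCancelAddMonoid M]

lemma apply_le_of_forall_sum_le {f : ι → M} {W₀ : Finset ι}
    (hmax : ∀ W : Finset ι, #W = #W₀ → ∑ c ∈ W, f c ≤ ∑ c ∈ W₀, f c)
    {c d : ι} (hc : c ∈ W₀) (hd : d ∉ W₀) : f d ≤ f c := by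
  have hd' : d ∉ W₀.erase c := fun h => hd (mem_of_mem_erase h)
  have hcard : #(insert d (W₀.erase c)) = #W₀ := by
    rw [card_insert_of_notMem hd', card_erase_add_one hc]
  have := hmax _ hcard
  rw [sum_insert hd', ← sum_erase_add _ _ hc, add_comm] at this
  exact le_of_add_le_add_left this

lemma exists_threshold_of_forall_sum_le [Fintype ι] [OrderBot M] {f : ι → M} {W₀ : Finset ι}
    (hmax : ∀ W : Finset ι, #W = #W₀ → ∑ c ∈ W, f c ≤ ∑ c ∈ W₀, f c) :
    ∃ t : M, (∀ c ∈ W₀, t ≤ f c) ∧ ∀ d ∉ W₀, f d ≤ t :=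
  ⟨(univ \ W₀).sup f,
    fun _ hc => Finset.sup_le fun _ hd => apply_le_of_forall_sum_le hmax hc (mem_sdiff.1 hd).2,
    fun _ hd => le_sup (mem_sdiff.2 ⟨mem_univ _, hd⟩)⟩

end TopSubset

lemma le_add_mul_one_sub_div {s N t : ℝ} (hs : 0 ≤ s) (hsN : s ≤ N) (ht : 0 ≤ t) :
    s ≤ t + s * (1 - t / N) := by
  have : s * (t / N) ≤ t := by
    rw [mul_div_left_comm]
    exact mul_le_of_le_one_right ht (div_le_one_of_le₀ hsN (hs.trans hsN))
  linarith

lemma mul_one_sub_div_of_le {N t : ℝ} (ht : 0 ≤ t) (htN : t ≤ N) : N * (1 - t / N) = N - t := by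
  rcases eq_or_ne N 0 with rfl | hN
  · simp [le_antisymm htN ht]
  · field_simp

section Approval

variable {C V : Type*} [DecidableEq C]

def supportCount (A : V → Finset C) (S : Finset V) (c : C) : ℕ := #{v ∈ S | c ∈ A v}

lemma supportCount_mono (A : V → Finset C) {S T : Finset V} (h : S ⊆ T) (c : C) :
    supportCount A S c ≤ supportCount A T c :=
  card_le_card (filter_subset_filter _ h)

lemma sum_sum_inter_eq_sum_supportCount_smul {M : Type*} [AddCommMonoid M]
    (A : V → Finset C) (S : Finset V) (W : Finset C) (f : C → M) :
    ∑ v ∈ S, ∑ c ∈ A v ∩ W, f c = ∑ c ∈ W, supportCount A S c • f c := by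
  rw [sum_comm' (t' := W) (s' := fun c => {v ∈ S | c ∈ A v})]
  · simp only [sum_const, supportCount]
  · intro v c
    simp only [mem_inter, mem_filter]
    tauto

lemma sum_card_inter_eq_sum_supportCount (A : V → Finset C) (S : Finset V) (W : Finset C) :
    ∑ v ∈ S, #(A v ∩ W) = ∑ c ∈ W, supportCount A S c := by
  simpa only [card_eq_sum_ones, smul_eq_mul, mul_one] using
    sum_sum_inter_eq_sum_supportCount_smul A S W (fun _ => (1 : ℕ))

variable [Fintype V] (A : V → Finset C) (k : ℕ) (W₀ : Finset C)

noncomputable def corePayment (t : ℝ) (v : V) : ℝ :=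
  k * t / Fintype.card V + ∑ c ∈ A v ∩ W₀, (1 - t / supportCount A univ c)

variable {t : ℝ}

lemma corePayment_nonneg (ht : 0 ≤ t) (hW₀ : ∀ c ∈ W₀, t ≤ supportCount A univ c) (v : V) :
    0 ≤ corePayment A k W₀ t v := by
  refine add_nonneg (by positivity) (sum_nonneg fun c hc => ?_)
  exact sub_nonneg.2 (div_le_one_of_le₀ (hW₀ c (mem_inter.1 hc).2) (Nat.cast_nonneg _))

lemma sum_corePayment [Nonempty V] (hk : #W₀ = k) (ht : 0 ≤ t)
    (hW₀ : ∀ c ∈ W₀, t ≤ supportCount A univ c) :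
    ∑ v, corePayment A k W₀ t v = ∑ v, (#(A v ∩ W₀) : ℝ) := by
  have hn : (Fintype.card V : ℝ) ≠ 0 := Nat.cast_ne_zero.2 Fintype.card_ne_zero
  have hcount : ∑ v, (#(A v ∩ W₀) : ℝ) = ∑ c ∈ W₀, (supportCount A univ c : ℝ) := by
    exact_mod_cast sum_card_inter_eq_sum_supportCount A univ W₀
  simp only [corePayment, sum_add_distrib, sum_const, card_univ, nsmul_eq_mul,
    sum_sum_inter_eq_sum_supportCount_smul, hcount]
  rw [sum_congr rfl fun c hc => mul_one_sub_div_of_le ht (hW₀ c hc), sum_sub_distrib, sum_const,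
    nsmul_eq_mul, hk]
  field_simp
  ring

lemma supportCount_le_add_ite (ht : 0 ≤ t) (hW₀ : ∀ d ∉ W₀, supportCount A univ d ≤ t)
    (S : Finset V) (c : C) :
    (supportCount A S c : ℝ) ≤
      t + if c ∈ W₀ then supportCount A S c * (1 - t / supportCount A univ c) else 0 := by
  have hS : (supportCount A S c : ℝ) ≤ supportCount A univ c := by
    exact_mod_cast supportCount_mono A (subset_univ S) c
  split_ifs with hc
  · exact le_add_mul_one_sub_div (Nat.cast_nonneg _) hS ht
  · linarith [hW₀ c hc]

lemma sum_card_inter_le_sum_corePayment (ht : 0 ≤ t)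
    (hin : ∀ c ∈ W₀, t ≤ supportCount A univ c) (hout : ∀ d ∉ W₀, supportCount A univ d ≤ t)
    (S : Finset V) (W : Finset C) (hW : #W ≤ #S * k / Fintype.card V) :
    ∑ v ∈ S, (#(A v ∩ W) : ℝ) ≤ ∑ v ∈ S, corePayment A k W₀ t v := by
  set share : C → ℝ := fun c => supportCount A S c * (1 - t / supportCount A univ c)
  have hshare : ∀ c ∈ W₀, 0 ≤ share c := fun c hc =>
    mul_nonneg (Nat.cast_nonneg _)
      (sub_nonneg.2 (div_le_one_of_le₀ (hin c hc) (Nat.cast_nonneg _)))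
  have hbase : (#W : ℝ) * t ≤ #S * (k * t / Fintype.card V) := by
    have : (#W : ℝ) ≤ #S * k / Fintype.card V :=
      (Nat.cast_le.2 hW).trans (by exact_mod_cast Nat.cast_div_le)
    calc (#W : ℝ) * t ≤ #S * k / Fintype.card V * t := mul_le_mul_of_nonneg_right this ht
      _ = #S * (k * t / Fintype.card V) := by ring
  have hcount : ∑ v ∈ S, (#(A v ∩ W) : ℝ) = ∑ c ∈ W, (supportCount A S c : ℝ) := by
    exact_mod_cast sum_card_inter_eq_sum_supportCount A S W
  calc ∑ v ∈ S, (#(A v ∩ W) : ℝ)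
      ≤ ∑ c ∈ W, (t + if c ∈ W₀ then share c else 0) := by
        rw [hcount]
        exact sum_le_sum fun c _ => supportCount_le_add_ite A W₀ ht hout S c
    _ = #W * t + ∑ c ∈ W ∩ W₀, share c := by
        rw [sum_add_distrib, sum_const, nsmul_eq_mul, ← sum_filter, filter_mem_eq_inter]
    _ ≤ #S * (k * t / Fintype.card V) + ∑ c ∈ W₀, share c :=
        add_le_add hbase
          (sum_le_sum_of_subset_of_nonneg inter_subset_right fun c hc _ => hshare c hc)
    _ = ∑ v ∈ S, corePayment A k W₀ t v := by
        simp only [corePayment, sum_add_distrib, sum_const, nsmul_eq_mul,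
          sum_sum_inter_eq_sum_supportCount_smul, share]

end Approval

/-- The TU-core of the AV multi-winner voting game is non-empty. -/
theorem stmt3 {C V : Type*} [Fintype C] [Fintype V] [Nonempty V] [DecidableEq C]
    (A : V → Finset C) (k : ℕ) (hk : k ≤ Fintype.card C) :
    ∃ (α : V → ℝ) (W₀ : Finset C), W₀.card = k ∧
      (∀ W : Finset C, W.card = k →
        ∑ v : V, ((A v ∩ W).card : ℝ) ≤ ∑ v : V, ((A v ∩ W₀).card : ℝ)) ∧
      (∀ v, 0 ≤ α v) ∧
      (∑ v : V, α v = ∑ v : V, ((A v ∩ W₀).card : ℝ)) ∧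
      ∀ (V' : Finset V) (W' : Finset C),
        W'.card ≤ V'.card * k / Fintype.card V →
        ∑ v ∈ V', ((A v ∩ W').card : ℝ) ≤ ∑ v ∈ V', α v := by
  obtain ⟨W₀, hW₀, hmax⟩ := exists_max_image (powersetCard k univ)
    (fun W => ∑ c ∈ W, supportCount A univ c) (powersetCard_nonempty.2 (by simpa using hk))
  rw [mem_powersetCard_univ] at hW₀
  have hmax' : ∀ W : Finset C, #W = #W₀ →
      ∑ c ∈ W, supportCount A univ c ≤ ∑ c ∈ W₀, supportCount A univ c :=
    fun W hW => hmax W (mem_powersetCard_univ.2 (hW.trans hW₀))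
  obtain ⟨t, hin, hout⟩ := exists_threshold_of_forall_sum_le hmax'
  have hin' : ∀ c ∈ W₀, (t : ℝ) ≤ supportCount A univ c := fun c hc => by exact_mod_cast hin c hc
  have hout' : ∀ d ∉ W₀, (supportCount A univ d : ℝ) ≤ t := fun d hd => by
    exact_mod_cast hout d hd
  refine ⟨corePayment A k W₀ t, W₀, hW₀, fun W hW => ?_,
    corePayment_nonneg A k W₀ t.cast_nonneg hin', sum_corePayment A k W₀ hW₀ t.cast_nonneg hin',
    sum_card_inter_le_sum_corePayment A k W₀ t.cast_nonneg hin' hout'⟩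
  have := hmax' W (hW.trans hW₀.symm)
  simp only [← sum_card_inter_eq_sum_supportCount] at this
  exact_mod_cast this
end

section
/- Let C be sorted so that the AV-scores s(c_1) ≥ s(c_2) ≥ ... ≥ s(c_m), where s(c) = |{v ∈ V : c ∈ A(v)}|. Define α(v) = k·s(c_k)/|V| + ∑_{j=1}^{k-1} [c_j ∈ A(v)] · (s(c_j) − s(c_k))/s(c_j). Then α lies in the TU-core of the AV multi-winner voting game: ∑_{v∈V} α(v) equals the maximal AV-score of a size-k committee, and for every coalition V' ⊆ V and every committee W' with |W'| ≤ ⌊|V'|·k/|V|⌋, ∑_{v∈V'} α(v) ≥ ∑_{v∈V'} |A(v) ∩ W'|. -/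
/-!
Write `t = s(c_k)` and `n_j(V')` for the number of approvers of `c_j` in `V'`. Summed over a
coalition, `α` pays the baseline `|V'| k t / |V|` plus the surplus `n_j(V') (s_j - t) / s_j` for
each `j < k`. Because `n_j(V') ≤ s_j` and the scores are sorted, `n_j(V') ≤ t + surplus_j(V')`
for every alternative, so a committee `W'` gives `V'` at most `|W'| t + ∑ surplus`, and the seat
cap bounds `|W'| t` by the baseline. For the grand coalition `n_j = s_j`, and the same bound is
attained by the top-`k` committee.
-/

open Finset

theorem le_add_mul_sub_div {x t s : ℝ} (hx : 0 ≤ x) (hxs : x ≤ s) (ht : 0 ≤ t) :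
    x ≤ t + x * ((s - t) / s) := by
  have hle : t * (x / s) ≤ t := mul_le_of_le_one_right ht (div_le_one_of_le₀ hxs (hx.trans hxs))
  rcases eq_or_ne s 0 with rfl | hs
  · simp [le_antisymm hxs hx, ht]
  · have : x * ((s - t) / s) = x - t * (x / s) := by field_simp
    linarith

theorem add_mul_sub_div_self {t s : ℝ} (ht : 0 ≤ t) (hts : t ≤ s) :
    t + s * ((s - t) / s) = s := by
  rcases eq_or_ne s 0 with rfl | hs
  · simp [le_antisymm hts ht]
  · field_simp
    ring

section
variable {V ι : Type*} [LinearOrder ι] (A : V → Finset ι) (s : ι → ℕ) (c : ι)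

def approvals (V' : Finset V) (j : ι) : ℕ := #{v ∈ V' | j ∈ A v}

theorem approvals_mono {V' V'' : Finset V} (h : V' ⊆ V'') (j : ι) :
    approvals A V' j ≤ approvals A V'' j :=
  card_le_card (filter_subset_filter _ h)

theorem sum_card_inter_eq_sum_approvals (V' : Finset V) (W : Finset ι) :
    ∑ v ∈ V', #(A v ∩ W) = ∑ j ∈ W, approvals A V' j := by
  simp_rw [inter_comm (A _) W, ← filter_mem_eq_inter]
  exact sum_card_bipartiteAbove_eq_sum_card_bipartiteBelow (fun v j => j ∈ A v)

/-- What the coalition `V'` is paid on account of alternative `j` beyond the baseline `s c`: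
each approver of an alternative `j` ranked above `c` gets the fraction `(s j - s c) / s j`. -/
noncomputable def surplus (V' : Finset V) (j : ι) : ℝ :=
  if j < c then approvals A V' j * (((s j : ℝ) - s c) / s j) else 0

variable {A s c}

theorem surplus_eq_zero_of_le {j : ι} (hj : c ≤ j) (V' : Finset V) : surplus A s c V' j = 0 :=
  if_neg hj.not_gt

theorem surplus_nonneg (hs : Antitone s) (V' : Finset V) (j : ι) : 0 ≤ surplus A s c V' j := by
  unfold surplus
  split_ifs with hj
  · have : (0 : ℝ) ≤ s j - s c := sub_nonneg.2 (by exact_mod_cast hs hj.le)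
    positivity
  · exact le_rfl

theorem approvals_le_add_surplus (hs : Antitone s) {V' : Finset V} {j : ι}
    (happ : approvals A V' j ≤ s j) : (approvals A V' j : ℝ) ≤ s c + surplus A s c V' j := by
  unfold surplus
  split_ifs with hj
  · exact le_add_mul_sub_div (Nat.cast_nonneg _) (by exact_mod_cast happ) (Nat.cast_nonneg _)
  · have : s j ≤ s c := hs (not_lt.1 hj)
    linarith [(Nat.cast_le (α := ℝ)).2 (happ.trans this)]

theorem add_surplus_eq {V' : Finset V} {j : ι} (hs : Antitone s) (happ : approvals A V' j = s j)
    (hj : j ≤ c) : s c + surplus A s c V' j = s j := by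
  rcases hj.lt_or_eq with hj | rfl
  · rw [surplus, if_pos hj, happ]
    exact add_mul_sub_div_self (Nat.cast_nonneg _) (by exact_mod_cast hs hj.le)
  · rw [surplus_eq_zero_of_le le_rfl, add_zero]

theorem sum_eq_card_mul_add_sum_surplus [Fintype ι] {α : V → ℝ} {b : ℝ}
    (hα : ∀ v, α v = b + ∑ j, if j < c ∧ j ∈ A v then ((s j : ℝ) - s c) / s j else 0)
    (V' : Finset V) : ∑ v ∈ V', α v = #V' * b + ∑ j, surplus A s c V' j := by
  simp_rw [hα, sum_add_distrib, sum_const, nsmul_eq_mul]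
  rw [sum_comm]
  congr 1
  refine sum_congr rfl fun j _ => ?_
  by_cases hj : j < c
  · simp [hj, surplus, approvals, ← sum_filter]
  · simp [hj, surplus]

theorem sum_card_inter_le_card_mul_add_sum_surplus [Fintype ι] (hs : Antitone s)
    {V' : Finset V} (happ : ∀ j, approvals A V' j ≤ s j) (W : Finset ι) :
    ∑ v ∈ V', (#(A v ∩ W) : ℝ) ≤ #W * s c + ∑ j, surplus A s c V' j := by
  rw [← Nat.cast_sum, sum_card_inter_eq_sum_approvals, Nat.cast_sum]
  calc ∑ j ∈ W, (approvals A V' j : ℝ)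
      ≤ ∑ j ∈ W, (s c + surplus A s c V' j) :=
        sum_le_sum fun j _ => approvals_le_add_surplus hs (happ j)
    _ = #W * s c + ∑ j ∈ W, surplus A s c V' j := by
      rw [sum_add_distrib, sum_const, nsmul_eq_mul]
    _ ≤ #W * s c + ∑ j, surplus A s c V' j :=
      add_le_add_right (sum_le_univ_sum_of_nonneg fun j => surplus_nonneg hs V' j) _

theorem sum_card_inter_Iic [Fintype V] [Fintype ι] [LocallyFiniteOrderBot ι] (hs : Antitone s)
    (happ : ∀ j, approvals A univ j = s j) :
    ∑ v, (#(A v ∩ Iic c) : ℝ) = #(Iic c) * s c + ∑ j, surplus A s c univ j := by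
  rw [← Nat.cast_sum, sum_card_inter_eq_sum_approvals, Nat.cast_sum]
  calc ∑ j ∈ Iic c, (approvals A univ j : ℝ)
      = ∑ j ∈ Iic c, (s c + surplus A s c univ j) :=
        sum_congr rfl fun j hj => by rw [add_surplus_eq hs (happ j) (mem_Iic.1 hj), happ j]
    _ = #(Iic c) * s c + ∑ j, surplus A s c univ j := by
      rw [sum_add_distrib, sum_const, nsmul_eq_mul, sum_subset (subset_univ _)]
      intro j _ hj
      exact surplus_eq_zero_of_le (not_le.1 (mt mem_Iic.2 hj)).le _

variable [Fintype V] [Fintype ι] {k : ℕ} {α : V → ℝ}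
  (hs : Antitone s) (happ : ∀ j, approvals A univ j = s j)
  (hα : ∀ v, α v = k * (s c : ℝ) / Fintype.card V +
    ∑ j, if j < c ∧ j ∈ A v then ((s j : ℝ) - s c) / s j else 0)
include hs happ hα

theorem sum_card_inter_le_sum_of_card_le_div {V' : Finset V} {W : Finset ι}
    (hW : #W ≤ #V' * k / Fintype.card V) :
    ∑ v ∈ V', (#(A v ∩ W) : ℝ) ≤ ∑ v ∈ V', α v := by
  have hWR : (#W : ℝ) ≤ #V' * k / Fintype.card V := by
    exact_mod_cast (Nat.cast_le.2 hW).trans (Nat.cast_div_le (α := ℝ))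
  refine (sum_card_inter_le_card_mul_add_sum_surplus (c := c) hs
    (fun j => happ j ▸ approvals_mono A (subset_univ V') j) W).trans ?_
  rw [sum_eq_card_mul_add_sum_surplus hα]
  gcongr ?_ + _
  calc (#W : ℝ) * s c ≤ #V' * k / Fintype.card V * s c := by gcongr
    _ = #V' * (k * s c / Fintype.card V) := by ring

theorem sum_eq_sum_card_inter_Iic [Nonempty V] [LocallyFiniteOrderBot ι] (hc : #(Iic c) = k) :
    ∑ v, α v = ∑ v, (#(A v ∩ Iic c) : ℝ) := by
  have hn : (Fintype.card V : ℝ) ≠ 0 := Nat.cast_ne_zero.2 Fintype.card_ne_zero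
  rw [sum_eq_card_mul_add_sum_surplus hα, sum_card_inter_Iic hs happ, hc, card_univ]
  field_simp

end

theorem stmt4_general {V : Type*} [Fintype V] [Nonempty V]
    (m k : ℕ) (hk : 0 < k) (hk1 : k - 1 < m)
    (A : V → Finset (Fin m))
    (s : Fin m → ℕ)
    (hs : ∀ j : Fin m, s j = (Finset.univ.filter (fun v : V => j ∈ A v)).card)
    (hsort : ∀ i j : Fin m, i ≤ j → s j ≤ s i)
    (α : V → ℝ)
    (hα : ∀ v : V, α v = k * (s ⟨k - 1, hk1⟩ : ℝ) / Fintype.card V +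
      ∑ j : Fin m, if (j : ℕ) < k - 1 ∧ j ∈ A v then
        ((s j : ℝ) - (s ⟨k - 1, hk1⟩ : ℝ)) / (s j : ℝ) else 0) :
    (∃ W₀ : Finset (Fin m), W₀.card = k ∧
      (∀ W : Finset (Fin m), W.card = k →
        ∑ v : V, ((A v ∩ W).card : ℝ) ≤ ∑ v : V, ((A v ∩ W₀).card : ℝ)) ∧
      ∑ v : V, α v = ∑ v : V, ((A v ∩ W₀).card : ℝ)) ∧
    ∀ (V' : Finset V) (W' : Finset (Fin m)),
      W'.card ≤ V'.card * k / Fintype.card V →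
      ∑ v ∈ V', ((A v ∩ W').card : ℝ) ≤ ∑ v ∈ V', α v := by
  set c : Fin m := ⟨k - 1, hk1⟩
  have happ (j : Fin m) : approvals A univ j = s j := (hs j).symm
  have hcore (V' : Finset V) (W' : Finset (Fin m)) :=
    sum_card_inter_le_sum_of_card_le_div (V' := V') (W := W') hsort happ hα
  have hcard : #(Iic c) = k := (Fin.card_Iic c).trans (Nat.sub_add_cancel hk)
  have hgrand := sum_eq_sum_card_inter_Iic hsort happ hα hcard
  -- The top-`k` committee is optimal because the grand coalition is a coalition with `k` seats.
  refine ⟨⟨Iic c, hcard, fun W hW => hgrand ▸ hcore univ W ?_, hgrand⟩, hcore⟩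
  rw [hW, card_univ, Nat.mul_div_cancel_left _ Fintype.card_pos]

/-- The baseline-plus-surplus utility vector of Algorithm 1 lies in the TU-core
of the AV game (alternatives sorted by decreasing approval score). -/
theorem stmt4 {V : Type*} [Fintype V] [Nonempty V]
    (m k : ℕ) (hk : 0 < k) (hkm : k ≤ m) (hk1 : k - 1 < m)
    (A : V → Finset (Fin m))
    (s : Fin m → ℕ)
    (hs : ∀ j : Fin m, s j = (Finset.univ.filter (fun v : V => j ∈ A v)).card)
    (hsort : ∀ i j : Fin m, i ≤ j → s j ≤ s i)
    (α : V → ℝ)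
    (hα : ∀ v : V, α v = k * (s ⟨k - 1, hk1⟩ : ℝ) / Fintype.card V +
      ∑ j : Fin m, if (j : ℕ) < k - 1 ∧ j ∈ A v then
        ((s j : ℝ) - (s ⟨k - 1, hk1⟩ : ℝ)) / (s j : ℝ) else 0) :
    (∃ W₀ : Finset (Fin m), W₀.card = k ∧
      (∀ W : Finset (Fin m), W.card = k →
        ∑ v : V, ((A v ∩ W).card : ℝ) ≤ ∑ v : V, ((A v ∩ W₀).card : ℝ)) ∧
      ∑ v : V, α v = ∑ v : V, ((A v ∩ W₀).card : ℝ)) ∧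
    ∀ (V' : Finset V) (W' : Finset (Fin m)),
      W'.card ≤ V'.card * k / Fintype.card V →
      ∑ v ∈ V', ((A v ∩ W').card : ℝ) ≤ ∑ v ∈ V', α v :=
  stmt4_general m k hk hk1 A s hs hsort α hα
end

section
/- In a multi-winner approval voting instance, a feasible CC utility vector is NTU-core-stable if and only if its witnessing committee satisfies justified representation (JR). Precisely: let α : V → {0,1} and W a size-k committee with α(v) = 1 iff A(v) ∩ W ≠ ∅. Then [no coalition V' ⊆ V admits a committee W' with |W'| ≤ ⌊|V'|·k/|V|⌋ such that every v ∈ V' has α(v) = 0 and A(v) ∩ W' ≠ ∅] if and only if [for every coalition V' with |V'| ≥ ⌈|V|/k⌉ and ⋂_{v∈V'} A(v) ≠ ∅, there exists v ∈ V' with A(v) ∩ W ≠ ∅]. -/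
/-!
A blocking coalition `V'` with `W'` uses `|W'| ≤ |V'|k/n` candidates to cover all of its
unrepresented voters, so by double counting some `c ∈ W'` is approved by at least
`|V'|/|W'| ≥ n/k` of them, hence by at least `⌈n/k⌉`: a cohesive group left without a
representative, violating JR. Conversely, a cohesive group of size `⌈n/k⌉` with common candidate
`c` and no representative in `W` blocks with the single candidate `{c}`, since `⌈n/k⌉ k ≥ n`.
-/

open Finset

lemma exists_lt_card_approvers_of_mul_lt {V C : Type*} [DecidableEq C] (A : V → Finset C)
    {V' : Finset V} {W' : Finset C} (hcover : ∀ v ∈ V', (A v ∩ W').Nonempty) {m : ℕ}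
    (h : #W' * m < #V') : ∃ c ∈ W', m < #{v ∈ V' | c ∈ A v} := by
  by_contra! hfew
  have hdouble : #V' • 1 ≤ #W' • m :=
    card_nsmul_le_card_nsmul (fun v c ↦ c ∈ A v)
      (fun v hv ↦ card_pos.2 <| by
        simpa only [bipartiteAbove, filter_mem_eq_inter, inter_comm] using hcover v hv)
      hfew
  simp only [smul_eq_mul, mul_one] at hdouble
  omega

lemma mul_pred_ceilDiv_lt {n k w m : ℕ} (hk : 0 < k) (hm : 0 < m) (hw : w ≤ m * k / n) :
    w * (n ⌈/⌉ k - 1) < m := by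
  rcases Nat.eq_zero_or_pos w with rfl | hw₀
  · simpa
  have hn : 0 < n := Nat.pos_of_ne_zero fun hn ↦ by simp [hn] at hw; omega
  have hq : 0 < n ⌈/⌉ k := Nat.div_pos (by omega) hk
  have hpred : k * (n ⌈/⌉ k - 1) < n := by
    by_contra! hle
    have := (ceilDiv_le_iff_le_mul hk).2 hle
    omega
  have hwn : w * n ≤ m * k := (Nat.le_div_iff_mul_le (by omega)).1 hw
  refine Nat.lt_of_mul_lt_mul_right (a := k) ?_
  calc w * (n ⌈/⌉ k - 1) * k = w * (k * (n ⌈/⌉ k - 1)) := by ring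
    _ < w * n := Nat.mul_lt_mul_of_pos_left hpred hw₀
    _ ≤ m * k := hwn

section ApprovalProfile

variable {C V : Type*} [Fintype V] [DecidableEq C] (A : V → Finset C) (k : ℕ) (W : Finset C)

def IsCoreStable : Prop :=
  ¬ ∃ V' : Finset V, V'.Nonempty ∧ ∃ W' : Finset C,
    #W' ≤ #V' * k / Fintype.card V ∧ ∀ v ∈ V', A v ∩ W = ∅ ∧ (A v ∩ W').Nonempty

-- `n ⌈/⌉ k` unfolds to `(n + k - 1) / k`, the form in which the main theorem states it.
def SatisfiesJR : Prop :=
  ∀ V' : Finset V, Fintype.card V ⌈/⌉ k ≤ #V' →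
    (∃ c : C, ∀ v ∈ V', c ∈ A v) → ∃ v ∈ V', (A v ∩ W).Nonempty

variable {A k W}

lemma satisfiesJR_of_isCoreStable [Nonempty V] (hk : 0 < k) (hcore : IsCoreStable A k W) :
    SatisfiesJR A k W := by
  intro V' hV' ⟨c, hc⟩
  by_contra! hunrep
  have hn : Fintype.card V ≤ k * #V' := (ceilDiv_le_iff_le_mul hk).1 hV'
  refine hcore ⟨V', card_pos.1 (Nat.pos_of_mul_pos_left (Fintype.card_pos.trans_le hn)), {c}, ?_,
    fun v hv ↦ ⟨?_, ⟨c, by simp [hc v hv]⟩⟩⟩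
  · rw [card_singleton, Nat.le_div_iff_mul_le Fintype.card_pos, one_mul, mul_comm]
    exact hn
  · simpa [← not_nonempty_iff_eq_empty] using hunrep v hv

lemma isCoreStable_of_satisfiesJR (hk : 0 < k) (hjr : SatisfiesJR A k W) :
    IsCoreStable A k W := by
  rintro ⟨V', hV', W', hW', hblock⟩
  obtain ⟨c, -, hc⟩ := exists_lt_card_approvers_of_mul_lt A (fun v hv ↦ (hblock v hv).2)
    (mul_pred_ceilDiv_lt hk (card_pos.2 hV') hW')
  obtain ⟨v, hv, hvW⟩ :=
    hjr {v ∈ V' | c ∈ A v} (by omega) ⟨c, fun v hv ↦ (mem_filter.1 hv).2⟩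
  simp [(hblock v (mem_filter.1 hv).1).1] at hvW

end ApprovalProfile

theorem stmt7_general {C V : Type*} [Fintype V] [Nonempty V] [DecidableEq C]
    (A : V → Finset C) (k : ℕ) (hk : 1 ≤ k)
    (W : Finset C) :
    (¬ ∃ V' : Finset V, V'.Nonempty ∧ ∃ W' : Finset C,
        W'.card ≤ V'.card * k / Fintype.card V ∧
        ∀ v ∈ V', A v ∩ W = ∅ ∧ (A v ∩ W').Nonempty) ↔
    (∀ V' : Finset V, (Fintype.card V + k - 1) / k ≤ V'.card →
        (∃ c : C, ∀ v ∈ V', c ∈ A v) → ∃ v ∈ V', (A v ∩ W).Nonempty) :=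
  ⟨satisfiesJR_of_isCoreStable hk, isCoreStable_of_satisfiesJR hk⟩

/-- A feasible CC utility vector (induced by committee `W`) is NTU-core-stable
iff `W` satisfies justified representation. -/
theorem stmt7 {C V : Type*} [Fintype C] [Fintype V] [Nonempty V] [DecidableEq C]
    (A : V → Finset C) (k : ℕ) (hk : 1 ≤ k) (hkC : k ≤ Fintype.card C)
    (W : Finset C) (hW : W.card = k) :
    (¬ ∃ V' : Finset V, V'.Nonempty ∧ ∃ W' : Finset C,
        W'.card ≤ V'.card * k / Fintype.card V ∧
        ∀ v ∈ V', A v ∩ W = ∅ ∧ (A v ∩ W').Nonempty) ↔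
    (∀ V' : Finset V, (Fintype.card V + k - 1) / k ≤ V'.card →
        (∃ c : C, ∀ v ∈ V', c ∈ A v) → ∃ v ∈ V', (A v ∩ W).Nonempty) :=
  stmt7_general A k hk W
end

section
/- The greedy covering algorithm produces a JR committee: if one iteratively selects, up to k times, an alternative approved by the maximum number of not-yet-covered voters (removing covered voters each time), then the resulting size-k committee W satisfies justified representation: there is no coalition V' with |V'| ≥ ⌈|V|/k⌉, a common approved alternative c* ∈ ⋂_{v∈V'} A(v), and W ∩ ⋃_{v∈V'} A(v) = ∅. -/
/-- Any run of the greedy covering procedure (repeatedly picking an alternative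
approved by the maximum number of uncovered voters) yields a size-k committee
satisfying justified representation. -/
theorem stmt8 {C V : Type*} [Fintype C] [Fintype V] [Nonempty V]
    [DecidableEq C] [DecidableEq V]
    (A : V → Finset C) (k : ℕ) (hk : 1 ≤ k) (hkC : k ≤ Fintype.card C)
    (g : ℕ → C) (U : ℕ → Finset V)
    (hU0 : U 0 = Finset.univ)
    (hUsucc : ∀ i, U (i + 1) = (U i).filter (fun v => g i ∉ A v))
    (hmax : ∀ i < k, ∀ c : C,
      ((U i).filter (fun v => c ∈ A v)).card ≤ ((U i).filter (fun v => g i ∈ A v)).card)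
    (W : Finset C) (hWcard : W.card = k)
    (hgW : ∀ i < k, (U i).Nonempty → g i ∈ W) :
    ¬ ∃ V' : Finset V, (Fintype.card V + k - 1) / k ≤ V'.card ∧
      (∃ c : C, ∀ v ∈ V', c ∈ A v) ∧ ∀ v ∈ V', A v ∩ W = ∅ := by
  rintro ⟨V', hV'card, ⟨c, hc⟩, hempty⟩
  set n := Fintype.card V with hn
  have hn1 : 1 ≤ n := Fintype.card_pos
  have hdm := Nat.div_add_mod (n + k - 1) k
  have hmod := Nat.mod_lt (n + k - 1) (by omega : 0 < k)
  have hq1 : 1 ≤ (n + k - 1) / k :=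
    (Nat.one_le_div_iff (by omega)).mpr (by omega)
  have hkq : n ≤ k * ((n + k - 1) / k) := by omega
  set q := (n + k - 1) / k with hqdef
  have hV'ne : V'.Nonempty := Finset.card_pos.mp (by omega)
  -- V' never gets covered
  have hsub : ∀ i ≤ k, V' ⊆ U i := by
    intro i hi
    induction i with
    | zero => rw [hU0]; exact Finset.subset_univ _
    | succ j ih =>
      have hj : j < k := hi
      have hsubj := ih (Nat.le_of_lt hj)
      rw [hUsucc]
      intro v hv
      rw [Finset.mem_filter]
      refine ⟨hsubj hv, ?_⟩
      intro hgv
      have hgiW : g j ∈ W := hgW j hj ⟨v, hsubj hv⟩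
      have : g j ∈ A v ∩ W := Finset.mem_inter.mpr ⟨hgv, hgiW⟩
      rw [hempty v hv] at this
      exact absurd this (Finset.notMem_empty _)
  -- each step removes at least q voters
  have hcard : ∀ i ≤ k, (U i).card + i * q ≤ n := by
    intro i hi
    induction i with
    | zero => simp [hU0, hn]
    | succ j ih =>
      have hj : j < k := hi
      have hihj := ih (Nat.le_of_lt hj)
      have hsplit : ((U j).filter (fun v => g j ∉ A v)).card
          + ((U j).filter (fun v => g j ∈ A v)).card = (U j).card := by
        rw [add_comm]
        exact Finset.card_filter_add_card_filter_not _
      have hrem : q ≤ ((U j).filter (fun v => g j ∈ A v)).card := by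
        have h1 : V' ⊆ (U j).filter (fun v => c ∈ A v) := by
          intro v hv
          exact Finset.mem_filter.mpr ⟨hsub j (Nat.le_of_lt hj) hv, hc v hv⟩
        have h2 := Finset.card_le_card h1
        have h3 := hmax j hj c
        omega
      have : U (j + 1) = (U j).filter (fun v => g j ∉ A v) := hUsucc j
      rw [this]
      have : (j + 1) * q = j * q + q := by ring
      omega
  have hUk := hcard k le_rfl
  have hVk : V'.card ≤ (U k).card := Finset.card_le_card (hsub k le_rfl)
  omega
end

section
/- The NTU-core of the Chamberlin–Courant multi-winner voting game is always non-empty: for every approval profile and committee size k ≤ |C|, there exists a size-k committee W such that the induced 0/1 utility vector α(v) = [A(v) ∩ W ≠ ∅] is not blocked by any coalition V' ⊆ V using a committee of size at most ⌊|V'|·k/|V|⌋ that covers all members of V' with α-value 0. -/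
/-- The NTU-core of the Chamberlin–Courant game is non-empty: some size-k
committee induces a 0/1 utility vector that no coalition can block. -/
theorem stmt9 {C V : Type*} [Fintype C] [Fintype V] [Nonempty V] [DecidableEq C]
    (A : V → Finset C) (k : ℕ) (hk : 1 ≤ k) (hkC : k ≤ Fintype.card C) :
    ∃ W : Finset C, W.card = k ∧
      ¬ ∃ V' : Finset V, V'.Nonempty ∧ ∃ W' : Finset C,
        W'.card ≤ V'.card * k / Fintype.card V ∧
        ∀ v ∈ V', A v ∩ W = ∅ ∧ (A v ∩ W').Nonempty := by
  classical
  set n := Fintype.card V with hn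
  have hnpos : 0 < n := Fintype.card_pos
  set cov : Finset C → ℕ :=
    fun W => (Finset.univ.filter fun v => (A v ∩ W).Nonempty).card with hcov
  -- a size-k committee exists
  have hsne : ((Finset.univ : Finset C).powersetCard k).Nonempty := by
    obtain ⟨W, hWsub, hWcard⟩ :=
      Finset.exists_subset_card_eq (s := (Finset.univ : Finset C)) (by simpa using hkC)
    exact ⟨W, Finset.mem_powersetCard.2 ⟨hWsub, hWcard⟩⟩
  -- choose a coverage-maximizing committee
  obtain ⟨W, hWmem, hWmax⟩ :=
    Finset.exists_max_image ((Finset.univ : Finset C).powersetCard k) cov hsne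
  have hWcard : W.card = k := (Finset.mem_powersetCard.1 hWmem).2
  refine ⟨W, hWcard, ?_⟩
  rintro ⟨V', hV'ne, W', hW'card, hblock⟩
  -- W' is nonempty
  obtain ⟨v₀, hv₀⟩ := hV'ne
  have hW'ne : W'.Nonempty := by
    obtain ⟨c, hc⟩ := (hblock v₀ hv₀).2
    exact ⟨c, (Finset.mem_inter.1 hc).2⟩
  have hW'pos : 0 < W'.card := Finset.card_pos.2 hW'ne
  -- from |W'| ≤ ⌊|V'|k/n⌋ get |W'| * n ≤ |V'| * k
  have hmul : W'.card * n ≤ V'.card * k :=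
    (Nat.le_div_iff_mul_le hnpos).1 hW'card
  -- pigeonhole: some c₀ ∈ W' covers many voters of V'
  obtain ⟨c₀, hc₀W', hc₀max⟩ :=
    Finset.exists_max_image W' (fun c => (V'.filter fun v => c ∈ A v).card) hW'ne
  set S : Finset V := V'.filter fun v => c₀ ∈ A v with hS
  have hSsub : S ⊆ V' := Finset.filter_subset _ _
  have hcoverUnion : V' ⊆ W'.biUnion fun c => V'.filter fun v => c ∈ A v := by
    intro v hv
    obtain ⟨c, hc⟩ := (hblock v hv).2
    rcases Finset.mem_inter.1 hc with ⟨hcA, hcW'⟩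
    exact Finset.mem_biUnion.2 ⟨c, hcW', Finset.mem_filter.2 ⟨hv, hcA⟩⟩
  have hV'le : V'.card ≤ W'.card * S.card := by
    calc V'.card ≤ (W'.biUnion fun c => V'.filter fun v => c ∈ A v).card :=
          Finset.card_le_card hcoverUnion
      _ ≤ ∑ c ∈ W', (V'.filter fun v => c ∈ A v).card := Finset.card_biUnion_le
      _ ≤ W'.card * S.card := by
          rw [← smul_eq_mul]
          exact Finset.sum_le_card_nsmul _ _ _ (fun c hc => hc₀max c hc)
  -- hence |S| * k ≥ n
  have hV'pos : 0 < V'.card := Finset.card_pos.2 ⟨v₀, hv₀⟩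
  have hSk : n ≤ S.card * k := by
    have h1 : V'.card * n ≤ W'.card * S.card * n := Nat.mul_le_mul_right n hV'le
    have h2 : W'.card * S.card * n ≤ V'.card * k * S.card := by
      calc W'.card * S.card * n = (W'.card * n) * S.card := by ring
        _ ≤ V'.card * k * S.card := Nat.mul_le_mul_right _ hmul
    have h3 : V'.card * n ≤ V'.card * (S.card * k) := by
      calc V'.card * n ≤ V'.card * k * S.card := le_trans h1 h2
        _ = V'.card * (S.card * k) := by ring
    exact le_of_mul_le_mul_left h3 hV'pos
  have hSpos : 0 < S.card := by
    rcases Nat.eq_zero_or_pos S.card with h | h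
    · rw [h, Nat.zero_mul] at hSk; omega
    · exact h
  obtain ⟨u, hu⟩ := Finset.card_pos.1 hSpos
  -- all of S uncovered by W, all approve c₀
  have hSunc : ∀ v ∈ S, A v ∩ W = ∅ := fun v hv => (hblock v (hSsub hv)).1
  have hSapp : ∀ v ∈ S, c₀ ∈ A v := fun v hv => (Finset.mem_filter.1 hv).2
  have hc₀W : c₀ ∉ W := by
    intro h
    have : c₀ ∈ A u ∩ W := Finset.mem_inter.2 ⟨hSapp u hu, h⟩
    rw [hSunc u hu] at this
    exact absurd this (Finset.notMem_empty _)
  -- uniquely-covered sets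
  set U : C → Finset V := fun w => Finset.univ.filter fun v => A v ∩ W = {w} with hU
  have hWne : W.Nonempty := Finset.card_pos.1 (by omega)
  obtain ⟨w₀, hw₀W, hw₀min⟩ :=
    Finset.exists_min_image W (fun w => (U w).card) hWne
  -- ∑_{w∈W} |U w| ≤ cov W
  have hUdisj : ∀ w1 ∈ W, ∀ w2 ∈ W, w1 ≠ w2 → Disjoint (U w1) (U w2) := by
    intro w1 _ w2 _ hne
    rw [Finset.disjoint_left]
    intro v h1 h2
    have e1 := (Finset.mem_filter.1 h1).2
    have e2 := (Finset.mem_filter.1 h2).2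
    rw [e1] at e2
    exact hne (Finset.singleton_injective e2)
  have hsumU : ∑ w ∈ W, (U w).card ≤ cov W := by
    rw [← Finset.card_biUnion hUdisj]
    apply Finset.card_le_card
    intro v hv
    obtain ⟨w, _, hw⟩ := Finset.mem_biUnion.1 hv
    have e := (Finset.mem_filter.1 hw).2
    refine Finset.mem_filter.2 ⟨Finset.mem_univ _, ?_⟩
    rw [e]; exact Finset.singleton_nonempty _
  -- cov W ≤ n - |S|
  have hcovle : cov W ≤ n - S.card := by
    have : (Finset.univ.filter fun v => (A v ∩ W).Nonempty) ⊆ Finset.univ \ S := by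
      intro v hv
      refine Finset.mem_sdiff.2 ⟨Finset.mem_univ _, fun hvS => ?_⟩
      have := (Finset.mem_filter.1 hv).2
      rw [hSunc v hvS] at this
      exact Finset.not_nonempty_empty this
    calc cov W ≤ (Finset.univ \ S).card := Finset.card_le_card this
      _ = n - S.card := by rw [Finset.card_sdiff_of_subset (Finset.subset_univ _), Finset.card_univ]
  -- k * |U w₀| ≤ cov W ≤ n - |S|, hence |U w₀| < |S|
  have hkU : k * (U w₀).card ≤ n - S.card := by
    calc k * (U w₀).card = W.card • (U w₀).card := by rw [hWcard, smul_eq_mul]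
      _ ≤ ∑ w ∈ W, (U w).card := Finset.card_nsmul_le_sum _ _ _ (fun w hw => hw₀min w hw)
      _ ≤ n - S.card := le_trans hsumU hcovle
  have hUltS : (U w₀).card < S.card := by
    have hSle : S.card ≤ n := Finset.card_le_univ S
    have h' : k * (U w₀).card + S.card ≤ n := by omega
    nlinarith [hSk, hSpos, hk]
  -- U w₀ ⊆ covered set
  have hUsub : U w₀ ⊆ Finset.univ.filter fun v => (A v ∩ W).Nonempty := by
    intro v hv
    have e := (Finset.mem_filter.1 hv).2
    refine Finset.mem_filter.2 ⟨Finset.mem_univ _, ?_⟩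
    rw [e]; exact Finset.singleton_nonempty _
  -- the improved committee
  set W₂ : Finset C := insert c₀ (W.erase w₀) with hW₂
  have hW₂card : W₂.card = k := by
    rw [hW₂, Finset.card_insert_of_notMem (fun h => hc₀W (Finset.mem_of_mem_erase h)),
      Finset.card_erase_of_mem hw₀W, hWcard]
    omega
  have hW₂mem : W₂ ∈ (Finset.univ : Finset C).powersetCard k :=
    Finset.mem_powersetCard.2 ⟨Finset.subset_univ _, hW₂card⟩
  -- covered(W₂) ⊇ (covered(W) \ U w₀) ∪ S
  have hsubset : ((Finset.univ.filter fun v => (A v ∩ W).Nonempty) \ U w₀) ∪ S ⊆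
      Finset.univ.filter fun v => (A v ∩ W₂).Nonempty := by
    intro v hv
    refine Finset.mem_filter.2 ⟨Finset.mem_univ _, ?_⟩
    rcases Finset.mem_union.1 hv with hv | hv
    · rcases Finset.mem_sdiff.1 hv with ⟨hv1, hv2⟩
      have hne : (A v ∩ W).Nonempty := (Finset.mem_filter.1 hv1).2
      have hneq : A v ∩ W ≠ {w₀} := by
        intro h
        exact hv2 (Finset.mem_filter.2 ⟨Finset.mem_univ _, h⟩)
      -- there is some w ∈ A v ∩ W, w ≠ w₀
      obtain ⟨w, hw, hwne⟩ : ∃ w ∈ A v ∩ W, w ≠ w₀ := by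
        by_contra h
        push_neg at h
        apply hneq
        apply Finset.Subset.antisymm
        · intro x hx; simp [h x hx]
        · intro x hx
          obtain ⟨y, hy⟩ := hne
          rw [Finset.mem_singleton] at hx
          rw [hx, ← h y hy]; exact hy
      rcases Finset.mem_inter.1 hw with ⟨hwA, hwW⟩
      exact ⟨w, Finset.mem_inter.2 ⟨hwA, Finset.mem_insert_of_mem
        (Finset.mem_erase.2 ⟨hwne, hwW⟩)⟩⟩
    · exact ⟨c₀, Finset.mem_inter.2 ⟨hSapp v hv, Finset.mem_insert_self _ _⟩⟩
  -- S disjoint from covered(W) \ U w₀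
  have hdisj : Disjoint ((Finset.univ.filter fun v => (A v ∩ W).Nonempty) \ U w₀) S := by
    rw [Finset.disjoint_right]
    intro v hvS hv
    have := (Finset.mem_filter.1 (Finset.mem_sdiff.1 hv).1).2
    rw [hSunc v hvS] at this
    exact Finset.not_nonempty_empty this
  have hcard2 : cov W < cov W₂ := by
    have h1 : cov W₂ ≥ (cov W - (U w₀).card) + S.card := by
      calc (cov W - (U w₀).card) + S.card
          = ((Finset.univ.filter fun v => (A v ∩ W).Nonempty) \ U w₀).card + S.card := by
            rw [Finset.card_sdiff_of_subset hUsub]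
        _ = (((Finset.univ.filter fun v => (A v ∩ W).Nonempty) \ U w₀) ∪ S).card :=
            (Finset.card_union_of_disjoint hdisj).symm
        _ ≤ cov W₂ := Finset.card_le_card hsubset
    have hUle : (U w₀).card ≤ cov W := Finset.card_le_card hUsub
    omega
  exact absurd (hWmax W₂ hW₂mem) (not_le.2 hcard2)
end

section
/- If a coalition V' NTU-blocks a feasible CC utility vector α via a committee W' with |W'| ≤ ⌊|V'|·k/|V|⌋, then there exists an alternative c ∈ W' and a subcoalition V'' ⊆ V' with |V''| ≥ ⌈|V|/k⌉ such that all voters in V'' approve c and have α-value 0. (Pigeonhole extraction of a cohesive group from an NTU-CC blocking coalition.) -/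
/-- Pigeonhole extraction of a cohesive group from an NTU-CC blocking
coalition. -/
theorem stmt14 {C V : Type*} [Fintype C] [Fintype V] [Nonempty V] [DecidableEq C]
    (A : V → Finset C) (k : ℕ) (hk : 1 ≤ k)
    (α : V → ℝ) (V' : Finset V) (W' : Finset C)
    (hne : V'.Nonempty)
    (hcap : W'.card ≤ V'.card * k / Fintype.card V)
    (hblock : ∀ v ∈ V', α v = 0 ∧ (A v ∩ W').Nonempty) :
    ∃ c ∈ W', ∃ V'' : Finset V, V'' ⊆ V' ∧
      (Fintype.card V + k - 1) / k ≤ V''.card ∧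
      ∀ v ∈ V'', c ∈ A v ∧ α v = 0 := by
  classical
  set n := Fintype.card V with hn
  have hn1 : 1 ≤ n := Fintype.card_pos
  set t := (n + k - 1) / k with ht
  -- choose a favorite candidate for each voter in V'
  have hch : ∀ v : V, v ∈ V' → ∃ c, c ∈ A v ∩ W' := by
    intro v hv; exact (hblock v hv).2
  choose f hf using hch
  obtain ⟨v0, hv0⟩ := hne
  -- f is defined only on V'; extend arbitrarily
  set g : V → C := fun v => if h : v ∈ V' then f v h else f v0 hv0 with hg
  have hmaps : ∀ v ∈ V', g v ∈ W' := by
    intro v hv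
    simp only [hg, dif_pos hv]
    exact (Finset.mem_inter.mp (hf v hv)).2
  -- W' nonempty
  have hWne : W'.Nonempty := ⟨g v0, hmaps v0 hv0⟩
  have hWpos : 0 < W'.card := Finset.card_pos.mpr hWne
  -- arithmetic
  have htk : (t - 1) * k ≤ n - 1 := by
    have ht1 : t - 1 = (n - 1) / k := by
      rw [ht]
      have : n + k - 1 = (n - 1) + k := by omega
      rw [this, Nat.add_div_right _ (by omega)]; exact Nat.succ_sub_one _
    rw [ht1]
    exact Nat.div_mul_le_self _ _
  have h1 : W'.card * n ≤ V'.card * k := by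
    rw [Nat.le_div_iff_mul_le (by omega : 0 < n)] at hcap
    exact hcap
  have hkey : W'.card * (t - 1) < V'.card := by
    have h2 : W'.card * (t - 1) * k < V'.card * k := by
      calc W'.card * (t - 1) * k = W'.card * ((t - 1) * k) := by ring
        _ ≤ W'.card * (n - 1) := Nat.mul_le_mul_left _ htk
        _ < W'.card * n := by
            exact Nat.mul_lt_mul_of_pos_left (by omega) hWpos
        _ ≤ V'.card * k := h1
    exact Nat.lt_of_mul_lt_mul_right h2
  obtain ⟨c, hcW, hcard⟩ :=
    Finset.exists_lt_card_fiber_of_mul_lt_card_of_maps_to hmaps hkey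
  refine ⟨c, hcW, V'.filter (fun v => g v = c), Finset.filter_subset _ _, ?_, ?_⟩
  · have ht1 : 1 ≤ t := by
      rw [ht, Nat.le_div_iff_mul_le (by omega : 0 < k)]; omega
    omega
  · intro v hv
    obtain ⟨hv1, hv2⟩ := Finset.mem_filter.mp hv
    have := hf v hv1
    have hgv : g v = f v hv1 := by simp [hg, dif_pos hv1]
    refine ⟨?_, (hblock v hv1).1⟩
    rw [← hv2, hgv]
    exact (Finset.mem_inter.mp this).1
end

section
/- In an exact-cover-induced AV/PAV game, the all-ones vector is in the TU-PAV-core iff the cover exists: given a 3-regular set system (universe X of size 3n̂, family 𝒮 of 3n̂ three-element sets, every element in exactly three sets), construct voters = elements, alternatives = sets, approvals A(v_i) = {c_j : x_i ∈ S_j}, and k = n̂. Then the constant vector α ≡ 1 lies in the TU-core under PAV if and only if (X, 𝒮) admits an exact cover by n̂ pairwise disjoint sets. -/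
/-!
Double counting voter–alternative incidences shows that the PAV-score of a coalition `V` for a
committee `W` is at most `∑_{j ∈ W} |S_j ∩ V| ≤ 3|W|`, since `H(x) ≤ x`. This gives every
coalition bound of the core, and it also shows that a committee of size `n` scores at most `3n`
in the grand coalition. Because `H(x) < x` for `x ≥ 2`, the value `3n` is attained exactly when
no voter approves two members of `W`; as the `3n` incidences are spread over `3n` voters, every
voter then approves exactly one member, i.e. `W` is an exact cover.
-/

/-- Harmonic partial sum `H x`. -/
noncomputable def harmonicSum (x : ℕ) : ℝ := ∑ z ∈ Finset.range x, (1 : ℝ) / (z + 1)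

open Finset

lemma harmonicSum_le_self (x : ℕ) : harmonicSum x ≤ x := by
  unfold harmonicSum
  calc ∑ z ∈ range x, (1 : ℝ) / (z + 1) ≤ ∑ _z ∈ range x, (1 : ℝ) := by
        gcongr with z
        exact div_le_one_of_le₀ (by linarith [z.cast_nonneg (α := ℝ)]) (by positivity)
    _ = x := by simp

lemma harmonicSum_one : harmonicSum 1 = 1 := by simp [harmonicSum]

lemma harmonicSum_lt_self {x : ℕ} (hx : 2 ≤ x) : harmonicSum x < x := by
  unfold harmonicSum
  calc ∑ z ∈ range x, (1 : ℝ) / (z + 1) < ∑ _z ∈ range x, (1 : ℝ) := by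
        apply sum_lt_sum
        · intro z _
          exact div_le_one_of_le₀ (by linarith [z.cast_nonneg (α := ℝ)]) (by positivity)
        · exact ⟨1, mem_range.mpr hx, by norm_num⟩
    _ = x := by simp

lemma le_one_of_harmonicSum_eq {x : ℕ} (h : harmonicSum x = x) : x ≤ 1 := by
  by_contra! hx
  exact (harmonicSum_lt_self hx).ne h

section PAV

variable {α β : Type*} [Fintype β] [DecidableEq α] [DecidableEq β] (S : β → Finset α)

/-- Voters `α`, alternatives `β`; voter `v` approves alternative `j` iff `v ∈ S j`. -/
noncomputable def pavScore (V : Finset α) (W : Finset β) : ℝ :=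
  ∑ v ∈ V, harmonicSum ((univ.filter fun j => v ∈ S j) ∩ W).card

lemma sum_card_approved_inter_eq_sum_card_inter (V : Finset α) (W : Finset β) :
    ∑ v ∈ V, ((univ.filter fun j => v ∈ S j) ∩ W).card = ∑ j ∈ W, (S j ∩ V).card := by
  have hV : ∀ j, S j ∩ V = V.bipartiteBelow (fun v j => v ∈ S j) j := fun j => by
    ext v; simp [bipartiteBelow, and_comm]
  have hW : ∀ v, (univ.filter fun j => v ∈ S j) ∩ W = W.bipartiteAbove (fun v j => v ∈ S j) v :=
    fun v => by ext j; simp [bipartiteAbove, and_comm]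
  simp only [hV, hW]
  exact sum_card_bipartiteAbove_eq_sum_card_bipartiteBelow _

lemma pavScore_le_sum_card_inter (V : Finset α) (W : Finset β) :
    pavScore S V W ≤ ∑ j ∈ W, ((S j ∩ V).card : ℝ) := by
  calc pavScore S V W ≤ ∑ v ∈ V, (((univ.filter fun j => v ∈ S j) ∩ W).card : ℝ) :=
        sum_le_sum fun v _ => harmonicSum_le_self _
    _ = ∑ j ∈ W, ((S j ∩ V).card : ℝ) := by
        exact_mod_cast sum_card_approved_inter_eq_sum_card_inter S V W

lemma pavScore_le_mul_card {m : ℕ} (hS : ∀ j, (S j).card ≤ m) (V : Finset α) (W : Finset β) :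
    pavScore S V W ≤ m * W.card := by
  calc pavScore S V W ≤ ∑ j ∈ W, ((S j ∩ V).card : ℝ) := pavScore_le_sum_card_inter S V W
    _ ≤ ∑ _j ∈ W, (m : ℝ) := by
        gcongr with j
        exact_mod_cast (card_le_card inter_subset_left).trans (hS j)
    _ = m * W.card := by rw [sum_const, nsmul_eq_mul, mul_comm]

lemma card_approved_inter_eq_one_iff (v : α) (W : Finset β) :
    ((univ.filter fun j => v ∈ S j) ∩ W).card = 1 ↔ ∃! j, j ∈ W ∧ v ∈ S j := by
  rw [card_eq_one_iff_existsUnique]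
  simp only [mem_inter, mem_filter, mem_univ, true_and, and_comm]

lemma pavScore_eq_card_of_existsUnique (V : Finset α) {W : Finset β}
    (hW : ∀ v, ∃! j, j ∈ W ∧ v ∈ S j) : pavScore S V W = V.card := by
  simp [pavScore, (card_approved_inter_eq_one_iff S _ W).mpr (hW _), harmonicSum_one]

variable [Fintype α]

lemma existsUnique_of_pavScore_eq {W : Finset β} (hscore : pavScore S univ W = Fintype.card α)
    (hinc : ∑ j ∈ W, (S j).card = Fintype.card α) (v : α) : ∃! j, j ∈ W ∧ v ∈ S j := by
  set d : α → ℕ := fun v => ((univ.filter fun j => v ∈ S j) ∩ W).card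
  have hd : ∑ v, d v = ∑ _v : α, 1 := by
    simpa [d, sum_card_approved_inter_eq_sum_card_inter] using hinc
  have hHd : ∑ v, harmonicSum (d v) = ∑ v, (d v : ℝ) := by
    rw [← Nat.cast_sum, hd]; simpa [pavScore] using hscore
  have hd_le : ∀ v ∈ univ, d v ≤ 1 := fun v _ =>
    le_one_of_harmonicSum_eq <|
      (sum_eq_sum_iff_of_le fun v _ => harmonicSum_le_self (d v)).mp hHd v (mem_univ v)
  exact (card_approved_inter_eq_one_iff S v W).mp <|
    (sum_eq_sum_iff_of_le hd_le).mp hd v (mem_univ v)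

end PAV

theorem stmt16_general (n : ℕ) (hn : 0 < n)
    (S : Fin (3 * n) → Finset (Fin (3 * n)))
    (hsize : ∀ j, (S j).card = 3) :
    ((∃ W : Finset (Fin (3 * n)), W.card = n ∧
        ∑ v : Fin (3 * n),
          harmonicSum (((Finset.univ.filter (fun j => v ∈ S j)) ∩ W).card) = 3 * n) ∧
      (∀ W : Finset (Fin (3 * n)), W.card = n →
        ∑ v : Fin (3 * n),
          harmonicSum (((Finset.univ.filter (fun j => v ∈ S j)) ∩ W).card) ≤ 3 * n) ∧
      (∀ (V' : Finset (Fin (3 * n))) (W' : Finset (Fin (3 * n))),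
        W'.card ≤ V'.card * n / (3 * n) →
        ∑ v ∈ V',
          harmonicSum (((Finset.univ.filter (fun j => v ∈ S j)) ∩ W').card) ≤ V'.card))
    ↔ ∃ 𝒮' : Finset (Fin (3 * n)), 𝒮'.card = n ∧
        ∀ x : Fin (3 * n), ∃! j, j ∈ 𝒮' ∧ x ∈ S j := by
  change ((∃ W : Finset (Fin (3 * n)), W.card = n ∧ pavScore S univ W = 3 * n) ∧
      (∀ W : Finset (Fin (3 * n)), W.card = n → pavScore S univ W ≤ 3 * n) ∧
      (∀ V' W', W'.card ≤ V'.card * n / (3 * n) → pavScore S V' W' ≤ V'.card)) ↔ _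
  have hS : ∀ j, (S j).card ≤ 3 := fun j => (hsize j).le
  constructor
  · rintro ⟨⟨W, hW, hscore⟩, -, -⟩
    refine ⟨W, hW, existsUnique_of_pavScore_eq S (by simpa using hscore) ?_⟩
    simp [hsize, hW, mul_comm]
  · rintro ⟨W, hW, hcover⟩
    refine ⟨⟨W, hW, ?_⟩, fun W' hW' => ?_, fun V' W' hW' => ?_⟩
    · simp [pavScore_eq_card_of_existsUnique S univ hcover]
    · simpa [hW'] using pavScore_le_mul_card S hS univ W'
    · have hW' : 3 * W'.card ≤ V'.card := by
        rw [Nat.mul_div_mul_right _ _ hn] at hW'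
        omega
      calc pavScore S V' W' ≤ 3 * W'.card := pavScore_le_mul_card S hS V' W'
        _ ≤ V'.card := by exact_mod_cast hW'

/-- In the PAV game induced by a 3-regular set system (voters = elements,
alternatives = sets, `k = n`), the all-ones vector is in the TU-core iff the
system admits an exact cover. -/
theorem stmt16 (n : ℕ) (hn : 0 < n)
    (S : Fin (3 * n) → Finset (Fin (3 * n)))
    (hsize : ∀ j, (S j).card = 3)
    (hreg : ∀ x : Fin (3 * n), (Finset.univ.filter (fun j => x ∈ S j)).card = 3) :
    ((∃ W : Finset (Fin (3 * n)), W.card = n ∧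
        ∑ v : Fin (3 * n),
          harmonicSum (((Finset.univ.filter (fun j => v ∈ S j)) ∩ W).card) = 3 * n) ∧
      (∀ W : Finset (Fin (3 * n)), W.card = n →
        ∑ v : Fin (3 * n),
          harmonicSum (((Finset.univ.filter (fun j => v ∈ S j)) ∩ W).card) ≤ 3 * n) ∧
      (∀ (V' : Finset (Fin (3 * n))) (W' : Finset (Fin (3 * n))),
        W'.card ≤ V'.card * n / (3 * n) →
        ∑ v ∈ V',
          harmonicSum (((Finset.univ.filter (fun j => v ∈ S j)) ∩ W').card) ≤ V'.card))
    ↔ ∃ 𝒮' : Finset (Fin (3 * n)), 𝒮'.card = n ∧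
        ∀ x : Fin (3 * n), ∃! j, j ∈ 𝒮' ∧ x ∈ S j :=
  stmt16_general n hn S hsize
end

section
/- In a 3-regular exact cover instance with no exact cover, the balanced weight vector placing weight 1/3 on each triple coalition violates the Bondareva–Shapley condition for the CC game: let (X, 𝒮) be a 3-regular set system (|X| = 3n̂, each of the 3n̂ sets has 3 elements, each element in exactly 3 sets) with no exact cover, construct the voting game with voters = elements, alternatives = sets, approvals via membership, k = n̂. Define λ(V_j) = 1/3 for each of the 3n̂ coalitions V_j = {voters approving c_j} and λ(S) = 0 otherwise. Then λ is balanced (each voter lies in exactly 3 such coalitions), ∑_S λ(S) · χ_CC(S) = 3n̂, but χ_CC(V) < 3n̂ (no size-n̂ committee covers all voters), so the TU-CC-core is empty by Bondareva–Shapley. -/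
/-!
Each triple coalition `S j` can elect its own alternative, so `χ(S j) = 3`, and since every voter
lies in exactly three triples the weights `1/3` are balanced and give `∑ λ χ = 3n`. A committee of
`n` triples covering all `3n` voters must cover each voter exactly once, i.e. be an exact cover;
hence `χ(V) < 3n`. The easy direction of Bondareva–Shapley then rules out core payoffs.
-/

open Finset

variable {V ι : Type*} [DecidableEq V]

section Counting

variable [Fintype V]

theorem sum_card_filter_mem (S : ι → Finset V) (W : Finset ι) :
    ∑ v, #(W.filter (fun j => v ∈ S j)) = ∑ j ∈ W, #(S j) := by
  simp only [card_filter]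
  rw [sum_comm]
  simp

theorem existsUnique_of_covers_of_sum_card_le [DecidableEq ι] (S : ι → Finset V) {W : Finset ι}
    (hcov : ∀ v, ∃ j ∈ W, v ∈ S j) (hW : ∑ j ∈ W, #(S j) ≤ Fintype.card V) :
    ∑ j ∈ W, #(S j) = Fintype.card V ∧ ∀ v, ∃! j, j ∈ W ∧ v ∈ S j := by
  have hpos : ∀ v ∈ univ, 1 ≤ #(W.filter (fun j => v ∈ S j)) := fun v _ => by
    obtain ⟨j, hjW, hvj⟩ := hcov v
    exact card_pos.mpr ⟨j, mem_filter.mpr ⟨hjW, hvj⟩⟩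
  have hsum : ∑ v, #(W.filter (fun j => v ∈ S j)) = ∑ _v : V, 1 :=
    le_antisymm (by simpa [sum_card_filter_mem] using hW) (sum_le_sum hpos)
  refine ⟨by simpa [sum_card_filter_mem] using hsum, fun v => ?_⟩
  have hone : #(W.filter (fun j => v ∈ S j)) = 1 :=
    le_antisymm ((sum_eq_sum_iff_of_le hpos).mp hsum.symm v (mem_univ v)).ge (hpos v (mem_univ v))
  obtain ⟨j, hj⟩ := card_eq_one.mp hone
  refine ⟨j, mem_filter.mp (hj ▸ mem_singleton_self j), fun i hi => ?_⟩
  simpa [hj] using (mem_filter.mpr hi : i ∈ W.filter (fun j => v ∈ S j))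

theorem sum_card_fiber_mul {R κ : Type*} [NonAssocSemiring R] [Fintype ι] [Fintype κ]
    [DecidableEq κ] (S : ι → κ) (g : κ → R) :
    ∑ T, (#(univ.filter (fun j => S j = T)) : R) * g T = ∑ j, g (S j) := by
  rw [← sum_fiberwise' univ S g]
  simp

theorem balanced_card_fiber_div [Fintype ι] (S : ι → Finset V) {r : ℕ} (hr : r ≠ 0)
    (hreg : ∀ v, #(univ.filter (fun j => v ∈ S j)) = r) (v : V) :
    ∑ T, (if v ∈ T then (#(univ.filter (fun j => S j = T)) : ℝ) / r else 0) = 1 :=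
  calc ∑ T, (if v ∈ T then (#(univ.filter (fun j => S j = T)) : ℝ) / r else 0)
      = ∑ T, (#(univ.filter (fun j => S j = T)) : ℝ) * ((if v ∈ T then 1 else 0) / r) :=
        sum_congr rfl fun T _ => by split_ifs <;> ring
    _ = ∑ j, (if v ∈ S j then 1 else 0) / (r : ℝ) := sum_card_fiber_mul S _
    _ = 1 := by rw [← sum_div, sum_boole, hreg v, div_self (by exact_mod_cast hr)]

/-- The easy direction of the Bondareva–Shapley theorem. -/
theorem sum_mul_le_of_balanced (lam : Finset V → ℝ) (hlam : ∀ T, 0 ≤ lam T)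
    (hbal : ∀ v, ∑ T, (if v ∈ T then lam T else 0) = 1)
    (chi : Finset V → ℝ) (α : V → ℝ) (hcore : ∀ T, chi T ≤ ∑ v ∈ T, α v) :
    ∑ T, lam T * chi T ≤ ∑ v, α v :=
  calc ∑ T, lam T * chi T ≤ ∑ T, lam T * ∑ v ∈ T, α v :=
        sum_le_sum fun T _ => mul_le_mul_of_nonneg_left (hcore T) (hlam T)
    _ = ∑ v, ∑ T with v ∈ T, lam T * α v := by simp only [mul_sum]; exact sum_comm' (by simp)
    _ = ∑ v, α v * ∑ T, (if v ∈ T then lam T else 0) := by simp [sum_filter, mul_sum, mul_comm]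
    _ = ∑ v, α v := by simp [hbal]

end Counting

section CCGame

variable [Fintype ι]

/-- Chamberlin–Courant value of the coalition `T`: `S j` is the set of voters approving the
alternative `j`, and committees have at most `k` members. -/
def ccValue (S : ι → Finset V) (k : ℕ) (T : Finset V) : ℕ :=
  ((univ : Finset ι).powerset.filter (fun W => #W ≤ k)).sup
    (fun W => #(T.filter (fun v => ∃ j ∈ W, v ∈ S j)))

variable (S : ι → Finset V) {k : ℕ}

theorem ccValue_le_card (T : Finset V) : ccValue S k T ≤ #T :=
  Finset.sup_le fun _ _ => card_filter_le _ _

theorem ccValue_approvalSet (hk : 1 ≤ k) (j : ι) : ccValue S k (S j) = #(S j) := by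
  refine le_antisymm (ccValue_le_card S _) ?_
  have hj : {j} ∈ (univ : Finset ι).powerset.filter (fun W => #W ≤ k) := by simpa using hk
  refine le_of_eq_of_le ?_ (le_sup (f := fun W => #((S j).filter (fun v => ∃ i ∈ W, v ∈ S i))) hj)
  simp

theorem exists_cover_of_ccValue_eq_card {T : Finset V} (h : ccValue S k T = #T) :
    ∃ W : Finset ι, #W ≤ k ∧ ∀ v ∈ T, ∃ j ∈ W, v ∈ S j := by
  obtain ⟨W, hW, hsup⟩ := exists_mem_eq_sup ((univ : Finset ι).powerset.filter (fun W => #W ≤ k))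
    ⟨∅, by simp⟩ (fun W => #(T.filter (fun v => ∃ j ∈ W, v ∈ S j)))
  have hfull : T.filter (fun v => ∃ j ∈ W, v ∈ S j) = T :=
    eq_of_subset_of_card_le (filter_subset _ _) (by rw [← h, ccValue, hsup])
  refine ⟨W, (mem_filter.mp hW).2, fun v hv => ?_⟩
  rw [← hfull] at hv
  exact (mem_filter.mp hv).2

theorem exists_exactCover_of_ccValue_univ_eq [Fintype V] [DecidableEq ι] {r : ℕ}
    (hsize : ∀ j, #(S j) = r) (hk : r * k ≤ Fintype.card V)
    (h : ccValue S k univ = Fintype.card V) :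
    ∃ W : Finset ι, r * #W = Fintype.card V ∧ ∀ v, ∃! j, j ∈ W ∧ v ∈ S j := by
  obtain ⟨W, hWk, hcov⟩ := exists_cover_of_ccValue_eq_card S (T := univ) h
  have hsum : ∑ j ∈ W, #(S j) = r * #W := by simp [hsize, mul_comm]
  obtain ⟨hcard, huniq⟩ := existsUnique_of_covers_of_sum_card_le S (fun v => hcov v (mem_univ v))
    (hsum ▸ (Nat.mul_le_mul_left r hWk).trans hk)
  exact ⟨W, hsum ▸ hcard, huniq⟩

end CCGame

/-- In a 3-regular set system with no exact cover, the weight vector placing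
1/3 on each triple coalition is balanced and violates the Bondareva–Shapley
condition for the CC game, so the TU-CC-core is empty. -/
theorem stmt17 (n : ℕ) (hn : 0 < n)
    (S : Fin (3 * n) → Finset (Fin (3 * n)))
    (hsize : ∀ j, (S j).card = 3)
    (hreg : ∀ x : Fin (3 * n), (Finset.univ.filter (fun j => x ∈ S j)).card = 3)
    (hnocover : ¬ ∃ 𝒮' : Finset (Fin (3 * n)), 𝒮'.card = n ∧
      ∀ x : Fin (3 * n), ∃! j, j ∈ 𝒮' ∧ x ∈ S j)
    (lam : Finset (Fin (3 * n)) → ℝ)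
    (hlam : ∀ T : Finset (Fin (3 * n)),
      lam T = ((Finset.univ.filter (fun j => S j = T)).card : ℝ) / 3)
    (chi : Finset (Fin (3 * n)) → ℕ)
    (hchi : ∀ T : Finset (Fin (3 * n)),
      chi T = ((Finset.univ : Finset (Fin (3 * n))).powerset.filter
          (fun W : Finset (Fin (3 * n)) => W.card ≤ T.card * n / (3 * n))).sup
        (fun W => (T.filter (fun v => ∃ j ∈ W, v ∈ S j)).card)) :
    (∀ v : Fin (3 * n),
      ∑ T : Finset (Fin (3 * n)), (if v ∈ T then lam T else 0) = 1) ∧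
    (∑ T : Finset (Fin (3 * n)), lam T * chi T = 3 * n) ∧
    (chi Finset.univ < 3 * n) ∧
    ¬ ∃ α : Fin (3 * n) → ℝ, (∀ v, 0 ≤ α v) ∧
      (∑ v, α v = (chi Finset.univ : ℝ)) ∧
      ∀ T : Finset (Fin (3 * n)), (chi T : ℝ) ≤ ∑ v ∈ T, α v := by
  have h3n : 0 < 3 * n := by positivity
  have hchi' : ∀ T, chi T = ccValue S (#T * n / (3 * n)) T := fun T => by
    rw [hchi, ccValue]
    -- the decidability instances of `∃ j ∈ W, v ∈ S j` here and in `ccValue` differ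
    congr!
  have hchiS : ∀ j, chi (S j) = 3 := fun j => by
    rw [hchi', hsize, Nat.div_self h3n, ccValue_approvalSet S le_rfl, hsize]
  have hbal : ∀ v : Fin (3 * n), ∑ T, (if v ∈ T then lam T else 0) = 1 := fun v => by
    simpa only [hlam, Nat.cast_ofNat] using balanced_card_fiber_div S three_ne_zero hreg v
  have hsum : ∑ T, lam T * chi T = 3 * n :=
    calc ∑ T, lam T * chi T
        = ∑ T, (#(univ.filter (fun j => S j = T)) : ℝ) * ((chi T : ℝ) / 3) :=
          sum_congr rfl fun T _ => by rw [hlam]; ring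
      _ = ∑ j, (chi (S j) : ℝ) / 3 := sum_card_fiber_mul S _
      _ = 3 * n := by simp [hchiS]
  have hchiV : chi univ = ccValue S n univ := by
    rw [hchi', card_univ, Fintype.card_fin, Nat.mul_div_cancel_left n h3n]
  have hlt : chi univ < 3 * n := by
    refine lt_of_le_of_ne (by simpa [hchi'] using ccValue_le_card S univ) fun heq => hnocover ?_
    obtain ⟨W, hW, huniq⟩ := exists_exactCover_of_ccValue_univ_eq S (k := n) hsize
      (by simp) (by simpa [← hchiV] using heq)
    exact ⟨W, by simp at hW; omega, huniq⟩
  refine ⟨hbal, hsum, hlt, ?_⟩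
  rintro ⟨α, -, hαsum, hcore⟩
  have := sum_mul_le_of_balanced lam (fun T => by rw [hlam]; positivity) hbal (chi ·) α hcore
  rw [hsum, hαsum] at this
  exact this.not_gt (by exact_mod_cast hlt)
end
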